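/- arXiv:2205.04000 — 7 statements merged into one kernel-verified Lean document; each statement's English description precedes it below -/
import Mathlib

section
/- Let R be a commutative noetherian ring, S a ring which is an R-algebra, and M a nonzero (left) S-module. Then the set Ass(M) of associated primes of M is nonempty; that is, M contains an R-elementary S-submodule. -/
/-- Annihilator in `R` of an `S`-submodule, `R` acting through `algebraMap R S`. -/
def annRS (R : Type*) {S M : Type*} [CommRing R] [Ring S] [Algebra R S]
    [AddCommGroup M] [Module S M] (N : Submodule S M) : Ideal R where
  carrier := {r : R | ∀ x ∈ N, algebraMap R S r • x = 0}
  zero_mem' := by intro x _; simp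
  add_mem' := by
    intro a b ha hb x hx
    rw [map_add, add_smul, ha x hx, hb x hx, add_zero]
  smul_mem' := by
    intro c a ha x hx
    rw [smul_eq_mul, map_mul, mul_smul, ha x hx, smul_zero]

/-- An `R`-elementary object: nonzero, finitely generated, and the `R`-annihilator of
every nonzero subobject equals a fixed prime ideal `p` of `R`. -/
def IsRElem (R : Type*) {S M : Type*} [CommRing R] [Ring S] [Algebra R S]
    [AddCommGroup M] [Module S M] (L : Submodule S M) : Prop :=
  L ≠ ⊥ ∧ L.FG ∧ ∃ p : Ideal R, p.IsPrime ∧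
    ∀ L' : Submodule S M, L' ≤ L → L' ≠ ⊥ → annRS R L' = p

/-- Associated primes of the subobject `N`. -/
def RAssOf (R : Type*) {S M : Type*} [CommRing R] [Ring S] [Algebra R S]
    [AddCommGroup M] [Module S M] (N : Submodule S M) : Set (Ideal R) :=
  {p | ∃ L : Submodule S M, L ≤ N ∧ IsRElem R L ∧ annRS R L = p}

section Aux

variable {R S M : Type*} [CommRing R] [Ring S] [Algebra R S]
    [AddCommGroup M] [Module S M]

lemma mem_annRS {N : Submodule S M} {r : R} :
    r ∈ annRS R N ↔ ∀ x ∈ N, algebraMap R S r • x = 0 := Iff.rfl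

lemma annRS_mono {N N' : Submodule S M} (h : N ≤ N') : annRS R N' ≤ annRS R N :=
  fun _ hr x hx => hr x (h hx)

/-- Scalar multiplication by `algebraMap R S a`, as an `S`-linear endomorphism. -/
def algSmul (S : Type*) {R M : Type*} [CommRing R] [Ring S] [Algebra R S]
    [AddCommGroup M] [Module S M] (a : R) : M →ₗ[S] M where
  toFun x := algebraMap R S a • x
  map_add' := smul_add _
  map_smul' s x := by simp [smul_smul, Algebra.commutes]

end Aux

/-- Every nonzero `S`-module `M`, where `S` is an algebra over a commutative noetherian
ring `R`, has a nonempty set of associated primes: it contains an `R`-elementary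
`S`-submodule. -/
theorem rAss_nonempty_of_nontrivial
    (R S M : Type*) [CommRing R] [IsNoetherianRing R] [Ring S] [Algebra R S]
    [AddCommGroup M] [Module S M] (hM : Nontrivial M) :
    (RAssOf R (⊤ : Submodule S M)).Nonempty := by
  classical
  -- the family of annihilators of nonzero submodules
  set Sig : Set (Ideal R) := {I | ∃ N : Submodule S M, N ≠ ⊥ ∧ annRS R N = I} with hS
  have hne : Sig.Nonempty := by
    refine ⟨annRS R (⊤ : Submodule S M), ⊤, ?_, rfl⟩
    intro h
    obtain ⟨y, hy⟩ := exists_ne (0 : M)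
    have : y ∈ (⊥ : Submodule S M) := h ▸ (Submodule.mem_top : y ∈ (⊤ : Submodule S M))
    exact hy (Submodule.mem_bot S |>.mp this)
  -- pick a maximal element
  have hwf : WellFounded ((· > ·) : Ideal R → Ideal R → Prop) :=
    (IsWellFounded.wf : WellFounded ((· > ·) : Ideal R → Ideal R → Prop))
  obtain ⟨p, hpS, hmax⟩ := hwf.has_min Sig hne
  obtain ⟨L, hLne, hLann⟩ := hpS
  -- maximality rephrased
  have hmax' : ∀ N : Submodule S M, N ≠ ⊥ → p ≤ annRS R N → annRS R N = p := by
    intro N hN hle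
    rcases hle.lt_or_eq with h | h
    · exact absurd h (hmax _ ⟨N, hN, rfl⟩)
    · exact h.symm
  -- every nonzero submodule of L has annihilator p
  have hsub : ∀ L' : Submodule S M, L' ≤ L → L' ≠ ⊥ → annRS R L' = p := by
    intro L' hle hne'
    exact hmax' L' hne' (hLann ▸ annRS_mono hle)
  -- p is prime
  have hprime : p.IsPrime := by
    constructor
    · intro h
      apply hLne
      rw [eq_bot_iff]
      intro x hx
      have h1 : (1 : R) ∈ annRS R L := hLann.symm ▸ h.symm ▸ Submodule.mem_top
      have := h1 x hx
      simpa using this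
    · intro a b hab
      by_contra hcon
      push_neg at hcon
      obtain ⟨ha, hb⟩ := hcon
      -- consider a • L
      set N := L.map (algSmul S a) with hN
      have hNne : N ≠ ⊥ := by
        rw [Submodule.ne_bot_iff]
        rw [← hLann, mem_annRS] at ha
        push_neg at ha
        obtain ⟨x, hx, hx0⟩ := ha
        exact ⟨algebraMap R S a • x, ⟨x, hx, rfl⟩, hx0⟩
      have hpN : p ≤ annRS R N := by
        intro r hr y hy
        obtain ⟨x, hx, rfl⟩ := hy
        show algebraMap R S r • algebraMap R S a • x = 0
        rw [smul_smul, ← map_mul, mul_comm, map_mul, ← smul_smul]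
        rw [← hLann] at hr
        rw [hr x hx, smul_zero]
      have hNann : annRS R N = p := hmax' N hNne hpN
      apply hb
      rw [← hNann, mem_annRS]
      rintro y ⟨x, hx, rfl⟩
      show algebraMap R S b • algebraMap R S a • x = 0
      rw [smul_smul, ← map_mul, mul_comm]
      rw [← hLann] at hab
      exact hab x hx
  -- pick a nonzero element of L and take the cyclic submodule
  obtain ⟨x, hxL, hx0⟩ := Submodule.ne_bot_iff L |>.mp hLne
  set L₀ : Submodule S M := Submodule.span S {x} with hL₀
  have hL₀le : L₀ ≤ L := Submodule.span_le.mpr (by simpa using hxL)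
  have hL₀ne : L₀ ≠ ⊥ := by
    intro h
    apply hx0
    have : x ∈ L₀ := Submodule.mem_span_singleton_self x
    rwa [h, Submodule.mem_bot] at this
  refine ⟨p, L₀, le_top, ⟨hL₀ne, Submodule.fg_span_singleton x, p, hprime,
    fun L' hle hne' => hsub L' (hle.trans hL₀le) hne'⟩, hsub L₀ hL₀le hL₀ne⟩
end

section
/- Let R be a commutative noetherian ring, S a ring which is an R-algebra, M an S-module and N an essential S-submodule of M. Then Ass(N) = Ass(M). -/
section

variable {R S M : Type*} [CommRing R] [Ring S] [Algebra R S] [AddCommGroup M] [Module S M]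

theorem RAssOf_mono {N N' : Submodule S M} (h : N ≤ N') : RAssOf R N ⊆ RAssOf R N' :=
  fun _ ⟨L, hLN, hL, hann⟩ => ⟨L, hLN.trans h, hL, hann⟩

theorem IsRElem.annRS_eq_of_le {L L' : Submodule S M} (hL : IsRElem R L) (hle : L' ≤ L)
    (hL' : L' ≠ ⊥) : annRS R L' = annRS R L := by
  obtain ⟨hL0, -, p, -, hp⟩ := hL
  rw [hp L' hle hL', hp L le_rfl hL0]

theorem IsRElem.of_le {L L' : Submodule S M} (hL : IsRElem R L) (hle : L' ≤ L)
    (hL' : L' ≠ ⊥) (hfg : L'.FG) : IsRElem R L' := by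
  obtain ⟨-, -, p, hp, hann⟩ := hL
  exact ⟨hL', hfg, p, hp, fun L'' h => hann L'' (h.trans hle)⟩

theorem annRS_mem_RAssOf_of_inf_ne_bot {L N : Submodule S M} (hL : IsRElem R L)
    (hNL : N ⊓ L ≠ ⊥) : annRS R L ∈ RAssOf R N := by
  obtain ⟨x, hx, hx0⟩ := Submodule.exists_mem_ne_zero_of_ne_bot hNL
  have hxN : Submodule.span S {x} ≤ N := (Submodule.span_singleton_le_iff_mem x N).2 hx.1
  have hxL : Submodule.span S {x} ≤ L := (Submodule.span_singleton_le_iff_mem x L).2 hx.2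
  have hx0' : Submodule.span S {x} ≠ ⊥ := by rwa [Ne, Submodule.span_singleton_eq_bot]
  exact ⟨_, hxN, hL.of_le hxL hx0' (Submodule.fg_span_singleton x),
    hL.annRS_eq_of_le hxL hx0'⟩

end

theorem rAss_eq_of_essential_general
    (R S M : Type*) [CommRing R] [Ring S] [Algebra R S]
    [AddCommGroup M] [Module S M] (N : Submodule S M)
    (hess : ∀ N' : Submodule S M, N' ≠ ⊥ → N ⊓ N' ≠ ⊥) :
    RAssOf R N = RAssOf R (⊤ : Submodule S M) := by
  refine (RAssOf_mono le_top).antisymm ?_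
  rintro _ ⟨L, -, hL, rfl⟩
  exact annRS_mem_RAssOf_of_inf_ne_bot hL (hess L hL.1)

/-- If `N` is an essential `S`-submodule of `M`, then `Ass(N) = Ass(M)`. -/
theorem rAss_eq_of_essential
    (R S M : Type*) [CommRing R] [IsNoetherianRing R] [Ring S] [Algebra R S]
    [AddCommGroup M] [Module S M] (N : Submodule S M)
    (hess : ∀ N' : Submodule S M, N' ≠ ⊥ → N ⊓ N' ≠ ⊥) :
    RAssOf R N = RAssOf R (⊤ : Submodule S M) :=
  rAss_eq_of_essential_general R S M N hess
end

section
/- Let R be a commutative noetherian ring, S a left noetherian ring which is an R-algebra, M an S-module and N an essential S-submodule of M. Then Supp(N) = Supp(M). -/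
/-- The support of an `R`-module: primes with nonzero localization. -/
def RSupp (R M : Type*) [CommRing R] [AddCommGroup M] [Module R M] : Set (Ideal R) :=
  {p | ∃ hp : p.IsPrime, Nontrivial (LocalizedModule (@Ideal.primeCompl R _ p hp) M)}

/-- Characterization of being in the support: some element is not killed by any
element of the prime complement. -/
lemma nontrivial_localizedModule_iff {R M : Type*} [CommRing R] [AddCommGroup M] [Module R M]
    (p : Ideal R) (hp : p.IsPrime) :
    Nontrivial (LocalizedModule p.primeCompl M) ↔
      ∃ x : M, ∀ u : p.primeCompl, (u : R) • x ≠ 0 := by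
  constructor
  · intro h
    obtain ⟨z, hz⟩ := exists_ne (0 : LocalizedModule p.primeCompl M)
    induction z using LocalizedModule.induction_on with
    | h m s =>
      refine ⟨m, fun u hu => hz ?_⟩
      rw [← LocalizedModule.zero_mk (1 : p.primeCompl), LocalizedModule.mk_eq]
      exact ⟨u, by simp [Submonoid.smul_def, hu]⟩
  · rintro ⟨x, hx⟩
    refine nontrivial_of_ne (LocalizedModule.mk x 1) 0 (fun h => ?_)
    rw [← LocalizedModule.zero_mk (1 : p.primeCompl), LocalizedModule.mk_eq] at h
    obtain ⟨u, hu⟩ := h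
    simp only [Submonoid.smul_def, one_smul, smul_zero] at hu
    exact hx u hu

section Aux

variable {R S M : Type*} [CommRing R] [Ring S]
    [Algebra R S] [AddCommGroup M] [Module S M] [Module R M] [IsScalarTower R S M]

lemma aux_smulCommClass : SMulCommClass R S M :=
  ⟨fun r s m => by
    rw [← algebraMap_smul S r m, ← algebraMap_smul S r (s • m), smul_smul, smul_smul,
      Algebra.commutes]⟩

/-- Multiplication by `r : R` as an `S`-linear map. -/
def mulMap (r : R) : M →ₗ[S] M where
  toFun m := r • m
  map_add' := smul_add r
  map_smul' s m := by
    haveI := aux_smulCommClass (R := R) (S := S) (M := M)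
    simp [smul_comm r s m]

@[simp] lemma mulMap_apply (r : R) (m : M) : mulMap (S := S) r m = r • m := rfl

end Aux

/-- If `N` is an essential `S`-submodule of `M`, then `Supp(N) = Supp(M)`. -/
theorem rSupp_eq_of_essential
    (R S M : Type*) [CommRing R] [IsNoetherianRing R] [Ring S] [IsNoetherianRing S]
    [Algebra R S] [AddCommGroup M] [Module S M] [Module R M] [IsScalarTower R S M]
    (N : Submodule S M)
    (hess : ∀ N' : Submodule S M, N' ≠ ⊥ → N ⊓ N' ≠ ⊥) :
    RSupp R ↥N = RSupp R M := by
  haveI := aux_smulCommClass (R := R) (S := S) (M := M)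
  ext p
  simp only [RSupp, Set.mem_setOf_eq]
  constructor
  · rintro ⟨hp, h⟩
    refine ⟨hp, ?_⟩
    rw [nontrivial_localizedModule_iff p hp] at h ⊢
    obtain ⟨x, hx⟩ := h
    refine ⟨(x : M), fun u hu => hx u ?_⟩
    have : (((u : R) • x : N) : M) = 0 := by
      rw [Submodule.coe_smul_of_tower]; exact hu
    exact Subtype.ext this
  · rintro ⟨hp, h⟩
    refine ⟨hp, ?_⟩
    rw [nontrivial_localizedModule_iff p hp] at h ⊢
    obtain ⟨x, hx⟩ := h
    by_contra hcon
    push_neg at hcon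
    -- choose killers for every element of N
    choose u hu using hcon
    -- the cyclic module generated by x
    set P : Submodule S M := Submodule.span S {x} with hPdef
    have hxne : x ≠ 0 := by
      intro h0
      exact hx 1 (by simp [h0])
    have hPne : P ≠ ⊥ := by
      rw [hPdef, Submodule.span_singleton_eq_bot.ne]; exact hxne
    haveI : IsNoetherian S ↥P := isNoetherian_of_fg_of_noetherian P (Submodule.fg_span_singleton x)
    -- W = N ⊓ P is nonzero and finitely generated
    set W : Submodule S M := N ⊓ P with hWdef
    have hWne : W ≠ ⊥ := hess P hPne
    have hWle : W ≤ P := inf_le_right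
    have hWfg : W.FG := by
      have h1 : (Submodule.comap P.subtype W).FG := IsNoetherian.noetherian _
      have h2 : Submodule.map P.subtype (Submodule.comap P.subtype W) = W := by
        rw [Submodule.map_comap_subtype, inf_eq_right.mpr hWle]
      rw [← h2]
      exact h1.map _
    obtain ⟨T, hT⟩ := hWfg
    have hTmemN : ∀ t ∈ T, t ∈ N := fun t ht =>
      (hT ▸ Submodule.subset_span ht : t ∈ W).1
    -- a single element of the prime complement killing all of W
    classical
    set r0 : p.primeCompl := ∏ t ∈ T.attach, u ⟨(t : M), hTmemN t t.2⟩ with hr0def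
    have hr0W : ∀ w ∈ W, (r0 : R) • w = 0 := by
      intro w hw
      have hle : W ≤ LinearMap.ker (mulMap (S := S) (M := M) (r0 : R)) := by
        rw [← hT, Submodule.span_le]
        intro t ht
        simp only [SetLike.mem_coe, LinearMap.mem_ker, mulMap_apply]
        have ht' : (⟨t, ht⟩ : {x // x ∈ T}) ∈ T.attach := Finset.mem_attach _ _
        have := Finset.prod_erase_mul T.attach
          (fun t' : {x // x ∈ T} => u ⟨(t' : M), hTmemN t' t'.2⟩) ht'
        have hcoe : (r0 : R) =
            ((∏ t' ∈ T.attach.erase ⟨t, ht⟩, u ⟨(t' : M), hTmemN t' t'.2⟩ : p.primeCompl) : R)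
              * (u ⟨t, hTmemN t ht⟩ : R) := by
          rw [hr0def, ← this]
          push_cast
          ring
        have hkill : (u ⟨t, hTmemN t ht⟩ : R) • t = 0 := by
          have := hu ⟨t, hTmemN t ht⟩
          have : ((((u ⟨t, hTmemN t ht⟩ : R)) • (⟨t, hTmemN t ht⟩ : N) : N) : M) = 0 :=
            congrArg _ this
          rwa [Submodule.coe_smul_of_tower] at this
        rw [hcoe, mul_smul, hkill, smul_zero]
      have := hle hw
      simpa using this
    -- the kernel chain inside P stabilizes
    set K : ℕ →o Submodule S ↥P :=
      ⟨fun n => Submodule.comap P.subtype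
        (LinearMap.ker (mulMap (S := S) (M := M) ((r0 : R) ^ n))),
       monotone_nat_of_le_succ (by
        intro n m hm
        simp only [Submodule.mem_comap, LinearMap.mem_ker, mulMap_apply] at hm ⊢
        rw [pow_succ', mul_smul, hm, smul_zero])⟩ with hKdef
    obtain ⟨n, hn⟩ := monotone_stabilizes_iff_noetherian.mpr ‹IsNoetherian S ↥P› K
    have hmemK : ∀ (i : ℕ) (m : M) (hm : m ∈ P), (⟨m, hm⟩ : ↥P) ∈ K i ↔ (r0 : R) ^ i • m = 0 := by
      intro i m hm
      simp [hKdef]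
    -- r0 ^ n cannot kill x
    have hrnx : (r0 : R) ^ n • x ≠ 0 := by
      intro h0
      refine hx (r0 ^ n) ?_
      rwa [SubmonoidClass.coe_pow]
    -- the image r0^n • P is nonzero, so it meets N
    set W2 : Submodule S M := Submodule.map (mulMap (S := S) (M := M) ((r0 : R) ^ n)) P with hW2def
    have hxP : x ∈ P := Submodule.mem_span_singleton_self x
    have hW2ne : W2 ≠ ⊥ := by
      intro h0
      have : (r0 : R) ^ n • x ∈ W2 := ⟨x, hxP, rfl⟩
      rw [h0, Submodule.mem_bot] at this
      exact hrnx this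
    have := hess W2 hW2ne
    obtain ⟨y, hy, hyne⟩ := Submodule.exists_mem_ne_zero_of_ne_bot this
    obtain ⟨hyN, hyW2⟩ := hy
    obtain ⟨m, hmP, hym⟩ := hyW2
    simp only [mulMap_apply] at hym
    -- y lies in W, so r0 kills it
    have hyP : y ∈ P := by
      rw [← hym]
      exact P.smul_of_tower_mem _ hmP
    have hyW : y ∈ W := ⟨hyN, hyP⟩
    have h1 : (r0 : R) • y = 0 := hr0W y hyW
    have h2 : (r0 : R) ^ (n + 1) • m = 0 := by
      rw [pow_succ', mul_smul, hym, h1]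
    have h3 : (⟨m, hmP⟩ : ↥P) ∈ K (n + 1) := (hmemK (n + 1) m hmP).mpr h2
    rw [← hn (n + 1) (Nat.le_succ n)] at h3
    have h4 : (r0 : R) ^ n • m = 0 := (hmemK n m hmP).mp h3
    rw [← hym, h4] at hyne
    exact hyne rfl
end

section
/- Let R be a commutative noetherian ring, S a ring which is an R-algebra, I and J ideals of R, and N an S-module that is finitely generated as an S-module. Then Supp(N) ⊆ W(I,J) if and only if there exists n ≥ 1 with I^n ⊆ Ann_R(N) + J. -/
/-- `W(I,J)`, the nonclosed support attached to the pair of ideals `(I,J)`. -/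
def WIJ {R : Type*} [CommRing R] (I J : Ideal R) : Set (Ideal R) :=
  {p | p.IsPrime ∧ ∃ n, 1 ≤ n ∧ I ^ n ≤ p ⊔ J}

/-- Key lemma: for `N` finitely generated over `S`, the localization of `N` at a prime `p`
is subsingleton iff the annihilator of `N` in `R` is not contained in `p`. -/
theorem subsingleton_localizedModule_iff
    {R S N : Type*} [CommRing R] [Ring S] [Algebra R S]
    [AddCommGroup N] [Module S N] [Module R N] [IsScalarTower R S N]
    (hfg : (⊤ : Submodule S N).FG) (p : Ideal R) (hp : p.IsPrime) :
    Subsingleton (LocalizedModule p.primeCompl N) ↔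
      ¬ annRS R (⊤ : Submodule S N) ≤ p := by
  constructor
  · intro h hle
    obtain ⟨T, hT⟩ := hfg
    rw [LocalizedModule.subsingleton_iff] at h
    choose f hf1 hf2 using h
    set r : R := ∏ x ∈ T, f x with hr
    have hrp : r ∈ p.primeCompl := prod_mem fun x _ => hf1 x
    have hrA : r ∈ annRS R (⊤ : Submodule S N) := by
      intro x hx
      have hx' : x ∈ Submodule.span S (T : Set N) := by rw [hT]; trivial
      refine Submodule.span_induction ?_ ?_ ?_ ?_ hx'
      · intro y hy
        rw [algebraMap_smul]
        obtain ⟨c, hc⟩ := Finset.dvd_prod_of_mem f hy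
        rw [hr, hc, mul_comm, mul_smul, hf2 y, smul_zero]
      · simp
      · intro a b _ _ ha hb; rw [smul_add, ha, hb, add_zero]
      · intro s a _ ha
        rw [← mul_smul, Algebra.commutes, mul_smul, ha, smul_zero]
    exact hrp (hle hrA)
  · intro h
    rw [SetLike.not_le_iff_exists] at h
    obtain ⟨r, hrA, hrp⟩ := h
    rw [LocalizedModule.subsingleton_iff]
    intro m
    refine ⟨r, hrp, ?_⟩
    have := hrA m trivial
    rwa [algebraMap_smul] at this

/-- For a finitely generated `S`-module `N`, `Supp(N) ⊆ W(I,J)` if and only if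
`I^n ⊆ Ann_R(N) + J` for some `n ≥ 1`. -/
theorem rSupp_subset_WIJ_iff
    (R S N : Type*) [CommRing R] [IsNoetherianRing R] [Ring S] [Algebra R S]
    [AddCommGroup N] [Module S N] [Module R N] [IsScalarTower R S N]
    (I J : Ideal R) (hfg : (⊤ : Submodule S N).FG) :
    RSupp R N ⊆ WIJ I J ↔ ∃ n, 1 ≤ n ∧ I ^ n ≤ annRS R (⊤ : Submodule S N) ⊔ J := by
  set A := annRS R (⊤ : Submodule S N) with hA
  constructor
  · intro h
    have hIrad : I ≤ (A ⊔ J).radical := by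
      rw [Ideal.radical_eq_sInf]
      refine le_sInf ?_
      rintro p ⟨hle, hp⟩
      have hpS : p ∈ RSupp R N := by
        refine ⟨hp, ?_⟩
        rw [← not_subsingleton_iff_nontrivial, subsingleton_localizedModule_iff hfg p hp,
          not_not]
        exact le_trans le_sup_left hle
      obtain ⟨_, n, _, hIn⟩ := h hpS
      have hJ : J ≤ p := le_trans le_sup_right hle
      have : I ^ n ≤ p := le_trans hIn (sup_le le_rfl hJ)
      exact Ideal.IsPrime.le_of_pow_le this
    obtain ⟨n, hn⟩ := Ideal.exists_radical_pow_le_of_fg (A ⊔ J) (IsNoetherian.noetherian _)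
    refine ⟨max n 1, le_max_right _ _, ?_⟩
    calc I ^ max n 1 ≤ I ^ n := Ideal.pow_le_pow_right (le_max_left _ _)
      _ ≤ (A ⊔ J).radical ^ n := Ideal.pow_right_mono hIrad n
      _ ≤ A ⊔ J := hn
  · rintro ⟨n, hn1, hIn⟩ p ⟨hp, hnt⟩
    have hAp : A ≤ p := by
      by_contra hc
      exact (not_subsingleton_iff_nontrivial.mpr hnt)
        ((subsingleton_localizedModule_iff hfg p hp).mpr hc)
    exact ⟨hp, n, hn1, le_trans hIn (sup_le_sup_right hAp J)⟩
end

section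
/- Let R be a commutative noetherian ring, S a ring which is an R-algebra, I and J ideals of R, and M an S-module. Then Ass(M) ∩ W(I,J) = Ass(Γ_{I,J}(M)). -/
/-- `Γ_{I,J}` of a module. -/
def gammaIJ (R S : Type*) [CommRing R] [Ring S] [Algebra R S] (I J : Ideal R)
    (M : Type*) [AddCommGroup M] [Module S M] : Submodule S M :=
  sSup {N : Submodule S M | N.FG ∧ ∃ n, 1 ≤ n ∧ I ^ n ≤ annRS R N ⊔ J}

/-!
An `R`-elementary submodule `L` has prime annihilator `p = Ann_R(L)`, so `p ∈ W(I,J)` exactly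
when `I^n ⊆ Ann_R(L) + J` for some `n`, i.e. when `L` is one of the submodules whose sum is
`Γ_{I,J}(M)`. Conversely, a finitely generated `L ≤ Γ_{I,J}(M)` is compact, hence lies in a finite
sum `N₁ + ⋯ + N_k` of such submodules, and since `Ann_R(N₁ + ⋯ + N_k) = ⋂ Ann_R(Nᵢ)`, the
exponents add up: `I^(n₁ + ⋯ + n_k) ⊆ Ann_R(L) + J`.
-/

theorem Ideal.pow_add_le_inf_sup {R : Type*} [CommRing R] {I J a b : Ideal R} {m n : ℕ}
    (ha : I ^ m ≤ a ⊔ J) (hb : I ^ n ≤ b ⊔ J) : I ^ (m + n) ≤ a ⊓ b ⊔ J :=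
  calc I ^ (m + n) = I ^ m * I ^ n := pow_add I m n
    _ ≤ (a ⊔ J) * (b ⊔ J) := Ideal.mul_mono ha hb
    _ = a * b ⊔ a * J ⊔ (J * b ⊔ J * J) := by rw [Ideal.sup_mul, Ideal.mul_sup, Ideal.mul_sup]
    _ ≤ a ⊓ b ⊔ J :=
      sup_le (sup_le (le_sup_of_le_left Ideal.mul_le_inf) (le_sup_of_le_right Ideal.mul_le_right))
        (sup_le (le_sup_of_le_right Ideal.mul_le_left) (le_sup_of_le_right Ideal.mul_le_left))

section Annihilator

variable {R S M : Type*} [CommRing R] [Ring S] [Algebra R S] [AddCommGroup M] [Module S M]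

theorem annRS_antitone {N₁ N₂ : Submodule S M} (h : N₁ ≤ N₂) : annRS R N₂ ≤ annRS R N₁ :=
  fun _ hr x hx => hr x (h hx)

@[simp]
theorem annRS_bot : annRS R (⊥ : Submodule S M) = ⊤ :=
  eq_top_iff.2 fun r _ x hx => by rw [(Submodule.mem_bot S).1 hx, smul_zero]

theorem annRS_sup (N₁ N₂ : Submodule S M) :
    annRS R (N₁ ⊔ N₂) = annRS R N₁ ⊓ annRS R N₂ := by
  refine le_antisymm (le_inf (annRS_antitone le_sup_left) (annRS_antitone le_sup_right)) ?_
  rintro r ⟨h₁, h₂⟩ x hx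
  obtain ⟨y, hy, z, hz, rfl⟩ := Submodule.mem_sup.1 hx
  rw [smul_add, h₁ y hy, h₂ z hz, add_zero]

theorem IsRElem.isPrime_annRS {L : Submodule S M} (hL : IsRElem R L) : (annRS R L).IsPrime := by
  obtain ⟨hL₀, -, p, hp, hann⟩ := hL
  exact hann L le_rfl hL₀ ▸ hp

theorem exists_pow_le_annRS_finset_sup {I J : Ideal R} (t : Finset (Submodule S M))
    (ht : ∀ N ∈ t, ∃ n, 1 ≤ n ∧ I ^ n ≤ annRS R N ⊔ J) :
    ∃ n, 1 ≤ n ∧ I ^ n ≤ annRS R (t.sup id) ⊔ J := by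
  refine Finset.sup_induction (p := fun N => ∃ n, 1 ≤ n ∧ I ^ n ≤ annRS R N ⊔ J)
    ⟨1, le_rfl, by simp⟩ ?_ ht
  rintro N₁ ⟨m, hm, h₁⟩ N₂ ⟨n, -, h₂⟩
  exact ⟨m + n, hm.trans (Nat.le_add_right m n),
    annRS_sup (R := R) N₁ N₂ ▸ Ideal.pow_add_le_inf_sup h₁ h₂⟩

theorem le_gammaIJ_iff_of_fg (I J : Ideal R) {L : Submodule S M} (hL : L.FG) :
    L ≤ gammaIJ R S I J M ↔ ∃ n, 1 ≤ n ∧ I ^ n ≤ annRS R L ⊔ J := by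
  refine ⟨fun hLΓ => ?_, fun hpow => le_sSup ⟨hL, hpow⟩⟩
  obtain ⟨t, htΓ, hLt⟩ := (CompleteLattice.isCompactElement_iff_exists_le_sSup_of_le_sSup _ L).1
    ((Submodule.fg_iff_compact L).1 hL) _ hLΓ
  obtain ⟨n, hn, hpow⟩ := exists_pow_le_annRS_finset_sup t fun N hN => (htΓ hN).2
  exact ⟨n, hn, hpow.trans (sup_le_sup_right (annRS_antitone hLt) J)⟩

theorem IsRElem.annRS_mem_WIJ_iff {I J : Ideal R} {L : Submodule S M} (hL : IsRElem R L) :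
    annRS R L ∈ WIJ I J ↔ L ≤ gammaIJ R S I J M := by
  rw [le_gammaIJ_iff_of_fg I J hL.2.1]
  exact and_iff_right hL.isPrime_annRS

end Annihilator

theorem rAss_inter_WIJ_eq_rAss_gammaIJ_general
    (R S M : Type*) [CommRing R] [Ring S] [Algebra R S]
    [AddCommGroup M] [Module S M] (I J : Ideal R) :
    RAssOf R (⊤ : Submodule S M) ∩ WIJ I J = RAssOf R (gammaIJ R S I J M) := by
  ext p
  constructor
  · rintro ⟨⟨L, -, hL, rfl⟩, hW⟩
    exact ⟨L, hL.annRS_mem_WIJ_iff.1 hW, hL, rfl⟩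
  · rintro ⟨L, hLΓ, hL, rfl⟩
    exact ⟨⟨L, le_top, hL, rfl⟩, hL.annRS_mem_WIJ_iff.2 hLΓ⟩

/-- `Ass(M) ∩ W(I,J) = Ass(Γ_{I,J}(M))`. -/
theorem rAss_inter_WIJ_eq_rAss_gammaIJ
    (R S M : Type*) [CommRing R] [IsNoetherianRing R] [Ring S] [Algebra R S]
    [AddCommGroup M] [Module S M] (I J : Ideal R) :
    RAssOf R (⊤ : Submodule S M) ∩ WIJ I J = RAssOf R (gammaIJ R S I J M) :=
  rAss_inter_WIJ_eq_rAss_gammaIJ_general R S M I J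
end

section
/- Let R be a commutative noetherian ring, S a left noetherian ring which is an R-algebra, I an ideal of R, and E an injective S-module. Then the I-power-torsion S-submodule Γ_I(E) := {x ∈ E | I^n • x = 0 for some n ≥ 1} is an injective S-module. -/
/-- The `I`-power-torsion `S`-submodule of `E`: elements annihilated by some power
`I^n` (`n ≥ 1`) of the ideal `I ⊆ R`, acting through `algebraMap R S`. -/
def gammaPow (R S : Type*) [CommRing R] [Ring S] [Algebra R S] (I : Ideal R)
    (E : Type*) [AddCommGroup E] [Module S E] : Submodule S E where
  carrier := {x : E | ∃ n, 1 ≤ n ∧ ∀ a ∈ I ^ n, algebraMap R S a • x = 0}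
  zero_mem' := ⟨1, le_refl 1, fun a _ => smul_zero _⟩
  add_mem' := by
    rintro x y ⟨n, hn, hx⟩ ⟨m, hm, hy⟩
    refine ⟨n + m, le_trans hn (Nat.le_add_right n m), fun a ha => ?_⟩
    have hxn : a ∈ I ^ n := Ideal.pow_le_pow_right (Nat.le_add_right n m) ha
    have hym : a ∈ I ^ m := Ideal.pow_le_pow_right (Nat.le_add_left m n) ha
    rw [smul_add, hx a hxn, hy a hym, add_zero]
  smul_mem' := by
    rintro s x ⟨n, hn, hx⟩
    refine ⟨n, hn, fun a ha => ?_⟩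
    rw [← mul_smul, Algebra.commutes a s, mul_smul, hx a ha, smul_zero]

section Aux

variable (R S : Type*) [CommRing R] [Ring S] [Algebra R S]
variable {E : Type*} [AddCommGroup E] [Module S E]

lemma mem_gammaPow {I : Ideal R} {x : E} :
    x ∈ gammaPow R S I E ↔ ∃ n, 1 ≤ n ∧ ∀ a ∈ I ^ n, algebraMap R S a • x = 0 :=
  Iff.rfl

/-- The annihilator in `R` of an element `x` of an `S`-module. -/
def annR (x : E) : Ideal R where
  carrier := {a : R | algebraMap R S a • x = 0}
  zero_mem' := by simp
  add_mem' := by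
    intro a b ha hb
    simp only [Set.mem_setOf_eq, map_add, add_smul] at ha hb ⊢
    rw [ha, hb, add_zero]
  smul_mem' := by
    intro r a ha
    simp only [Set.mem_setOf_eq, smul_eq_mul, map_mul, mul_smul] at ha ⊢
    rw [ha, smul_zero]

lemma mem_annR {x : E} {a : R} : a ∈ annR R S x ↔ algebraMap R S a • x = 0 := Iff.rfl

lemma mem_gammaPow_iff [IsNoetherianRing R] {I : Ideal R} {x : E} :
    x ∈ gammaPow R S I E ↔ I ≤ (annR R S x).radical := by
  constructor
  · rintro ⟨n, hn1, hn⟩ a ha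
    exact Ideal.mem_radical_iff.mpr ⟨n, (mem_annR R S).mpr (hn _ (Ideal.pow_mem_pow ha n))⟩
  · intro h
    obtain ⟨n, hn⟩ := Ideal.exists_pow_le_of_le_radical_of_fg h (IsNoetherian.noetherian I)
    refine ⟨max n 1, le_max_right _ _, fun a ha => ?_⟩
    exact (mem_annR R S).mp (hn (Ideal.pow_le_pow_right (le_max_left n 1) ha))

lemma pow_smul_smul_comm (a : R) (n : ℕ) (s : S) (v : E) :
    algebraMap R S a ^ n • s • v = s • algebraMap R S a ^ n • v := by
  rw [← mul_smul, ← map_pow, Algebra.commutes (a ^ n) s, mul_smul, map_pow]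

end Aux

/-- If `E` is an injective `S`-module, `R` is commutative noetherian and `S` is a left
noetherian `R`-algebra, then for every ideal `I ⊆ R` the `I`-power-torsion submodule
`Γ_I(E)` is again an injective `S`-module. -/
theorem gammaPow_injective_of_injective
    (R S E : Type*) [CommRing R] [IsNoetherianRing R] [Ring S] [IsNoetherianRing S]
    [Algebra R S] [AddCommGroup E] [Module S E] (I : Ideal R)
    (hE : Module.Injective S E) :
    Module.Injective S ↥(gammaPow R S I E) := by
  classical
  set Γ : Submodule S E := gammaPow R S I E with hΓdef
  -- Zorn: a maximal submodule `C` with `C ⊓ Γ = ⊥`.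
  obtain ⟨C, -, hC⟩ : ∃ C : Submodule S E, ⊥ ≤ C ∧
      Maximal (· ∈ {C : Submodule S E | C ⊓ Γ = ⊥}) C := by
    refine zorn_le_nonempty₀ _ ?_ ⊥ (by simp)
    intro c hcs hchain y hy
    haveI : Nonempty c := ⟨⟨y, hy⟩⟩
    refine ⟨sSup c, ?_, fun z hz => le_sSup hz⟩
    rw [Set.mem_setOf_eq, Submodule.eq_bot_iff]
    intro x hx
    have hx1 : x ∈ sSup c := hx.1
    obtain ⟨⟨D, hD⟩, hxD⟩ :=
      (Submodule.mem_iSup_of_directed _ hchain.directed).mp (sSup_eq_iSup' c ▸ hx1)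
    have hbot : D ⊓ Γ = ⊥ := hcs hD
    exact (Submodule.eq_bot_iff _).mp hbot x ⟨hxD, hx.2⟩
  have hCΓ : C ⊓ Γ = ⊥ := hC.1
  -- the image of Γ in E ⧸ C
  set σ : E →ₗ[S] E ⧸ C := C.mkQ with hσdef
  set Γbar : Submodule S (E ⧸ C) := LinearMap.range (σ ∘ₗ Γ.subtype) with hΓbar
  -- Γbar is "essential" in E ⧸ C
  have ess : ∀ D : Submodule S (E ⧸ C), D ⊓ Γbar = ⊥ → D = ⊥ := by
    intro D hD
    have hle : C ≤ Submodule.comap σ D := by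
      intro x hx
      have : σ x = 0 := by
        simpa [σ] using (Submodule.Quotient.mk_eq_zero C).mpr hx
      simp only [Submodule.mem_comap, this]; exact D.zero_mem
    have hmem : Submodule.comap σ D ⊓ Γ = ⊥ := by
      rw [Submodule.eq_bot_iff]
      rintro γ ⟨hγD, hγΓ⟩
      have h1 : σ γ ∈ D ⊓ Γbar := ⟨hγD, ⟨⟨γ, hγΓ⟩, rfl⟩⟩
      rw [hD, Submodule.mem_bot] at h1
      have h2 : γ ∈ C := by
        have := (Submodule.Quotient.mk_eq_zero C).mp (by simpa [σ] using h1)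
        exact this
      exact (Submodule.eq_bot_iff _).mp hCΓ γ ⟨h2, hγΓ⟩
    have heq : Submodule.comap σ D = C :=
      le_antisymm (hC.2 hmem hle) hle
    rw [Submodule.eq_bot_iff]
    intro y hy
    obtain ⟨x, rfl⟩ := C.mkQ_surjective y
    have hxC : x ∈ C := by rw [← heq]; exact hy
    simpa [σ] using (Submodule.Quotient.mk_eq_zero C).mpr hxC
  -- Γ maps isomorphically onto Γbar; extend the inverse to ψ : E ⧸ C → E
  have hinj : Function.Injective (σ ∘ₗ Γ.subtype) := by
    rw [← LinearMap.ker_eq_bot, Submodule.eq_bot_iff]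
    intro v hv
    have h1 : (v : E) ∈ C := by
      have : σ (v : E) = 0 := hv
      exact (Submodule.Quotient.mk_eq_zero C).mp (by simpa [σ] using this)
    have : (v : E) = 0 := (Submodule.eq_bot_iff _).mp hCΓ _ ⟨h1, v.2⟩
    exact Subtype.ext this
  set eΓ : ↥Γ ≃ₗ[S] ↥Γbar := LinearEquiv.ofInjective _ hinj with heΓ
  obtain ⟨ψ, hψ⟩ := hE.out Γbar.subtype (Submodule.injective_subtype Γbar)
    (Γ.subtype ∘ₗ (eΓ.symm : ↥Γbar →ₗ[S] ↥Γ))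
  have hψΓ : ∀ γ : ↥Γ, ψ (σ (γ : E)) = (γ : E) := by
    intro γ
    have h1 : Γbar.subtype (eΓ γ) = σ (γ : E) := rfl
    have h2 := hψ (eΓ γ)
    rw [h1] at h2
    rw [h2]
    simp [LinearMap.comp_apply]
  -- every element of E ⧸ C is I-power torsion
  have tor : ∀ (y : E ⧸ C) (a : R), a ∈ I → ∃ t : ℕ, algebraMap R S a ^ t • y = 0 := by
    intro y a ha
    set c : S := algebraMap R S a with hc
    have hmono : ∀ i : ℕ,
        LinearMap.ker (LinearMap.toSpanSingleton S (E ⧸ C) (c ^ i • y)) ≤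
        LinearMap.ker (LinearMap.toSpanSingleton S (E ⧸ C) (c ^ (i + 1) • y)) := by
      intro i s hs
      have hs' : s • (c ^ i • y) = 0 := hs
      show s • (c ^ (i + 1) • y) = 0
      rw [pow_succ', mul_smul, ← mul_smul, ← Algebra.commutes a s, mul_smul, hs', smul_zero]
    set L : ℕ →o Submodule S S :=
      ⟨fun i => LinearMap.ker (LinearMap.toSpanSingleton S (E ⧸ C) (c ^ i • y)),
        monotone_nat_of_le_succ hmono⟩ with hL
    obtain ⟨t, ht⟩ := monotone_stabilizes_iff_noetherian.mpr inferInstance L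
    refine ⟨t, ?_⟩
    by_contra h0
    have hD : Submodule.span S {c ^ t • y} ≠ ⊥ := by
      intro hbot
      apply h0
      have := Submodule.mem_span_singleton_self (R := S) (c ^ t • y)
      rw [hbot] at this
      exact (Submodule.mem_bot _).mp this
    have hmeet : Submodule.span S {c ^ t • y} ⊓ Γbar ≠ ⊥ := fun h => hD (ess _ h)
    obtain ⟨z, hzm, hz0⟩ := Submodule.exists_mem_ne_zero_of_ne_bot hmeet
    obtain ⟨s, hs⟩ := Submodule.mem_span_singleton.mp hzm.1
    obtain ⟨γ, hγ⟩ := hzm.2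
    obtain ⟨n, hn1, hn⟩ := γ.2
    have hcn : c ^ n • z = 0 := by
      rw [← hγ]
      show c ^ n • σ ((γ : ↥Γ) : E) = 0
      rw [← map_smul]
      have : c ^ n • ((γ : ↥Γ) : E) = 0 := by
        have := hn (a ^ n) (Ideal.pow_mem_pow ha n)
        rwa [map_pow] at this
      rw [this, map_zero]
    have hsL : s ∈ L (n + t) := by
      show s • (c ^ (n + t) • y) = 0
      rw [pow_add, mul_smul, ← pow_smul_smul_comm, hs, hcn]
    have hsLt : s ∈ L t := by
      rw [ht (n + t) (Nat.le_add_left t n)]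
      exact hsL
    have : s • (c ^ t • y) = 0 := hsLt
    exact hz0 (by rw [← hs, this])
  -- ψ lands in Γ
  have hψmem : ∀ y : E ⧸ C, ψ y ∈ Γ := by
    intro y
    rw [hΓdef, mem_gammaPow_iff]
    intro a ha
    obtain ⟨t, ht⟩ := tor y a ha
    refine Ideal.mem_radical_iff.mpr ⟨t, (mem_annR R S).mpr ?_⟩
    rw [map_pow, ← map_smul ψ, ht, map_zero]
  -- the retraction E → Γ
  set p : E →ₗ[S] ↥Γ := LinearMap.codRestrict Γ (ψ ∘ₗ σ) (fun x => hψmem _) with hp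
  have hpΓ : ∀ γ : ↥Γ, p (γ : E) = γ := by
    intro γ
    apply Subtype.ext
    show ψ (σ (γ : E)) = (γ : E)
    exact hψΓ γ
  -- conclude injectivity of Γ
  refine ⟨fun X Y _ _ _ _ f hf g => ?_⟩
  obtain ⟨G, hG⟩ := hE.out f hf (Γ.subtype ∘ₗ g)
  refine ⟨p ∘ₗ G, fun x => ?_⟩
  have : G (f x) = ((g x : ↥Γ) : E) := hG x
  rw [LinearMap.comp_apply, this]
  exact hpΓ (g x)
end

section
/- Let R be a commutative noetherian ring, S a left noetherian ring which is an R-algebra, I and J ideals of R, and M an S-module that is finitely generated as an S-module and satisfies Γ_{I,J}(M) = 0. Then there exists a ∈ I that is a non-zerodivisor on M, i.e., the map M → M, x ↦ a • x, is injective. -/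
section Aux

variable (R : Type*) {S M : Type*} [CommRing R] [Ring S] [Algebra R S]
  [AddCommGroup M] [Module S M]

/-- The kernel of multiplication by a central scalar, as an `S`-submodule. -/
def cker (r : R) : Submodule S M where
  carrier := {y | algebraMap R S r • y = 0}
  zero_mem' := smul_zero _
  add_mem' := by
    intro a b ha hb
    simp only [Set.mem_setOf_eq] at *
    rw [smul_add, ha, hb, add_zero]
  smul_mem' := by
    intro s y hy
    simp only [Set.mem_setOf_eq] at *
    rw [smul_smul, Algebra.commutes r s, ← smul_smul, hy, smul_zero]

/-- Annihilator of a single element. -/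
def annx (x : M) : Ideal R := annRS R (Submodule.span S {x})

lemma mem_annx_iff (r : R) (x : M) :
    r ∈ annx R (S := S) x ↔ algebraMap R S r • x = 0 := by
  constructor
  · intro h
    exact h x (Submodule.mem_span_singleton_self x)
  · intro h y hy
    have : Submodule.span S {x} ≤ cker R r := by
      rw [Submodule.span_le, Set.singleton_subset_iff]
      exact h
    exact this hy

variable [IsNoetherianRing R]
set_option linter.unusedSectionVars false

/-- The set of maximal annihilators of nonzero elements. -/
def maxAnn : Set (Ideal R) :=
  {p | (∃ x : M, x ≠ 0 ∧ p = annx R (S := S) x) ∧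
    ∀ x : M, x ≠ 0 → p ≤ annx R (S := S) x → p = annx R (S := S) x}

lemma exists_maxAnn_le (x : M) (hx : x ≠ 0) :
    ∃ p ∈ maxAnn R (S := S) (M := M), annx R (S := S) x ≤ p := by
  classical
  set A : Set (Ideal R) :=
    {q | ∃ y : M, y ≠ 0 ∧ q = annx R (S := S) y ∧ annx R (S := S) x ≤ q} with hA
  have hne : A.Nonempty := ⟨annx R (S := S) x, x, hx, rfl, le_rfl⟩
  obtain ⟨p, hpA, hpmax⟩ := set_has_maximal_iff_noetherian.mpr
    (inferInstance : IsNoetherian R R) A hne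
  obtain ⟨y, hy0, hpy, hxy⟩ := hpA
  refine ⟨p, ⟨⟨y, hy0, hpy⟩, ?_⟩, hxy⟩
  intro z hz0 hpz
  by_contra hne'
  exact hpmax (annx R (S := S) z) ⟨z, hz0, rfl, le_trans hxy hpz⟩
    (lt_of_le_of_ne hpz hne')

lemma maxAnn_isPrime {p : Ideal R} (hp : p ∈ maxAnn R (S := S) (M := M)) :
    p.IsPrime := by
  obtain ⟨⟨x, hx0, hpx⟩, hmax⟩ := hp
  constructor
  · intro htop
    have h1 : (1 : R) ∈ p := htop ▸ Submodule.mem_top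
    rw [hpx, mem_annx_iff, map_one, one_smul] at h1
    exact hx0 h1
  · intro a b hab
    by_cases hb : b ∈ p
    · exact Or.inr hb
    left
    set y : M := algebraMap R S b • x with hy
    have hy0 : y ≠ 0 := by
      intro h0
      exact hb (hpx ▸ (mem_annx_iff R b x).mpr h0)
    have hle : p ≤ annx R (S := S) y := by
      intro r hr
      rw [mem_annx_iff]
      rw [hpx, mem_annx_iff] at hr
      rw [hy, smul_smul, ← map_mul, mul_comm, map_mul, ← smul_smul, hr, smul_zero]
    have := hmax y hy0 hle
    rw [this, mem_annx_iff, hy, smul_smul, ← map_mul]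
    rw [hpx, mem_annx_iff] at hab
    exact hab

lemma maxAnn_finite [IsNoetherianRing S] (hfg : (⊤ : Submodule S M).FG) :
    (maxAnn R (S := S) (M := M)).Finite := by
  classical
  haveI : Module.Finite S M := Module.finite_def.mpr hfg
  haveI : IsNoetherian S M := inferInstance
  by_contra hinf
  have hinf' : (maxAnn R (S := S) (M := M)).Infinite := hinf
  have f := hinf'.natEmbedding
  -- choose witnesses
  have hch : ∀ k : ℕ, ∃ x : M, x ≠ 0 ∧ (f k : Ideal R) = annx R (S := S) x :=
    fun k => (f k).2.1
  choose x hx0 hfx using hch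
  set N : ℕ →o Submodule S M :=
    ⟨fun k => (Finset.range k).sup (fun i => Submodule.span S {x i}), by
      intro a b hab
      exact Finset.sup_mono (by simpa using Finset.range_subset_range.mpr hab)⟩ with hN
  obtain ⟨n, hn⟩ := monotone_stabilizes_iff_noetherian.mpr
    (inferInstance : IsNoetherian S M) N
  have hxn : x n ∈ N n := by
    have : x n ∈ N (n + 1) := by
      have : Submodule.span S {x n} ≤ N (n + 1) :=
        Finset.le_sup (f := fun i => Submodule.span S {x i})
          (Finset.self_mem_range_succ n)
      exact this (Submodule.mem_span_singleton_self _)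
    rwa [hn (n + 1) (Nat.le_succ n)]
  have hinfle : (Finset.range n).inf (fun i => annx R (S := S) (x i))
      ≤ annx R (S := S) (x n) := by
    intro r hr
    rw [mem_annx_iff]
    have hker : ((Finset.range n).sup fun i => Submodule.span S {x i}) ≤ cker R r := by
      refine Finset.sup_le ?_
      intro i hi
      rw [Submodule.span_le, Set.singleton_subset_iff]
      have : r ∈ annx R (S := S) (x i) :=
        Finset.inf_le (f := fun i => annx R (S := S) (x i)) hi hr
      exact (mem_annx_iff R r (x i)).mp this
    exact hker hxn
  have hprime : (annx R (S := S) (x n)).IsPrime := by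
    have := maxAnn_isPrime R (f n).2
    rwa [hfx n] at this
  obtain ⟨i, hi, hle⟩ := (Ideal.IsPrime.inf_le' hprime).mp hinfle
  have hmaxi := (f i).2.2 (x n) (hx0 n) (by rw [hfx i]; exact hle)
  have hfeq : f i = f n := Subtype.ext (hmaxi.trans (hfx n).symm)
  have : i = n := f.injective hfeq
  rw [this] at hi
  exact absurd (Finset.mem_range.mp hi) (lt_irrefl n)

end Aux

/-- If `M` is a finitely generated `S`-module with `Γ_{I,J}(M) = 0`, then the ideal `I`
contains a non-zerodivisor on `M`. -/
theorem exists_nonzerodivisor_of_gammaIJ_eq_bot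
    (R S M : Type*) [CommRing R] [IsNoetherianRing R] [Ring S] [IsNoetherianRing S]
    [Algebra R S] [AddCommGroup M] [Module S M] (I J : Ideal R)
    (hfg : (⊤ : Submodule S M).FG) (h : gammaIJ R S I J M = ⊥) :
    ∃ a ∈ I, Function.Injective fun x : M => algebraMap R S a • x := by
  classical
  by_contra hcon
  push_neg at hcon
  -- every element of I kills a nonzero element
  have hzd : ∀ a ∈ I, ∃ x : M, x ≠ 0 ∧ algebraMap R S a • x = 0 := by
    intro a ha
    obtain ⟨u, v, huv, hne⟩ := Function.not_injective_iff.mp (hcon a ha)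
    refine ⟨u - v, sub_ne_zero.mpr hne, ?_⟩
    rw [smul_sub, huv, sub_self]
  have hfin := maxAnn_finite R (S := S) (M := M) hfg
  -- I is contained in the union of the maximal annihilator primes
  have hsub : (I : Set R) ⊆ ⋃ p ∈ (hfin.toFinset : Set (Ideal R)), (p : Set R) := by
    intro a ha
    obtain ⟨x, hx0, hax⟩ := hzd a ha
    obtain ⟨p, hp, hle⟩ := exists_maxAnn_le R (S := S) x hx0
    refine Set.mem_biUnion (by simpa using hp) (hle ?_)
    exact (mem_annx_iff R a x).mpr hax
  have hp' : ∀ p ∈ hfin.toFinset, p ≠ (⊥ : Ideal R) → p ≠ (⊥ : Ideal R) →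
      Ideal.IsPrime (id p : Ideal R) := by
    intro p hp _ _
    exact maxAnn_isPrime R (by simpa using hp)
  obtain ⟨p, hpmem, hIp⟩ := (Ideal.subset_union_prime (f := id) ⊥ ⊥ hp').mp hsub
  have hpm : p ∈ maxAnn R (S := S) (M := M) := by simpa using hpmem
  obtain ⟨⟨x, hx0, hpx⟩, -⟩ := hpm
  -- then span S {x} lies in gammaIJ
  have hNle : Submodule.span S {x} ≤ gammaIJ R S I J M := by
    apply le_sSup
    refine ⟨Submodule.fg_span_singleton x, 1, le_rfl, ?_⟩
    rw [pow_one]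
    refine le_trans ?_ le_sup_left
    intro r hr
    have : r ∈ annx R (S := S) x := hpx ▸ hIp hr
    exact this
  rw [h] at hNle
  have : x ∈ (⊥ : Submodule S M) := hNle (Submodule.mem_span_singleton_self x)
  exact hx0 (by simpa using this)
end
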